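/- There do not exist five distinct vertices a, b, c, d, e ∈ V such that φ(ac) = φ(bc), φ(ab) = φ(bd), φ(ad) = φ(de), and φ(ae) = φ(ec), where φ is the Modified CFLS coloring. -/

import Mathlib

namespace CFLS

/-- A vertex of `K_n` for `n = 2^(m^2)`: `m` blocks, each a string of `m` bits.
`x k` is the `k`-th block `x^(k+1)`, and `x k j` is its `j`-th bit (most significant first). -/
abbrev Vtx (m : ℕ) := Fin m → Fin m → Bool

/-- The `j`-th bit of a bit string (as a total function of `j : ℕ`). -/
def bitAt {N : ℕ} (f : Fin N → Bool) (j : ℕ) : Bool :=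
  if h : j < N then f ⟨j, h⟩ else false

/-- The value of a bit string read as a binary integer, most significant bit first. -/
def strToNat {N : ℕ} (f : Fin N → Bool) : ℕ :=
  ∑ j : Fin N, if f j then 2 ^ (N - 1 - j.val) else 0

/-- The `k`-th block of a vertex (as a total function of `k : ℕ`). -/
def blockAt {m : ℕ} (x : Vtx m) (k : ℕ) : Fin m → Bool :=
  if h : k < m then x ⟨k, h⟩ else fun _ => false

/-- The least block index at which `x` and `y` differ. -/
noncomputable def firstDiffBlock {m : ℕ} (x y : Vtx m) : ℕ :=
  sInf {k | blockAt x k ≠ blockAt y k}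

/-- The position (1-indexed) of the first bit at which two bit strings differ; `0` if equal. -/
noncomputable def firstDiffIdx {N : ℕ} (f g : Fin N → Bool) : ℕ :=
  if f = g then 0 else sInf {j | bitAt f j ≠ bitAt g j} + 1

/-- The value of a vertex read as a binary integer (concatenation of its blocks). -/
def vtxToNat {m : ℕ} (x : Vtx m) : ℕ :=
  ∑ k : Fin m, strToNat (x k) * (2 ^ m) ^ (m - 1 - k.val)

/-- The colors of the Modified CFLS coloring:
`((i, {x^(i), y^(i)}), i_1, …, i_m, δ_1, …, δ_m)`. -/
abbrev Color (m : ℕ) := (ℕ × Set (Fin m → Bool)) × (Fin m → ℕ) × (Fin m → ℤ)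

/-- The Modified CFLS color of the edge `xy` assuming `x ≤ y` as binary integers. -/
noncomputable def phiAux {m : ℕ} (x y : Vtx m) : Color m :=
  ((firstDiffBlock x y,
      {blockAt x (firstDiffBlock x y), blockAt y (firstDiffBlock x y)}),
   fun k => firstDiffIdx (x k) (y k),
   fun k => if strToNat (x k) ≤ strToNat (y k) then (1 : ℤ) else -1)

/-- The Modified CFLS coloring `φ`. -/
noncomputable def phi {m : ℕ} (x y : Vtx m) : Color m :=
  if vtxToNat x ≤ vtxToNat y then phiAux x y else phiAux y x

/-- The ten edges among five vertices. -/
def edgeList {m : ℕ} (a b c d e : Vtx m) : List (Vtx m × Vtx m) :=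
  [(a,b),(a,c),(a,d),(a,e),(b,c),(b,d),(b,e),(c,d),(c,e),(d,e)]

/-- The number of the ten edges among `a,b,c,d,e` receiving color `col` under `φ`. -/
noncomputable def colorCount {m : ℕ} (a b c d e : Vtx m) (col : Color m) : ℕ :=
  ((edgeList a b c d e).map fun p => phi p.1 p.2).countP fun x =>
    @decide (x = col) (Classical.propDecidable _)

/-- Five pairwise distinct vertices. -/
def Distinct5 {m : ℕ} (a b c d e : Vtx m) : Prop :=
  a ≠ b ∧ a ≠ c ∧ a ≠ d ∧ a ≠ e ∧ b ≠ c ∧ b ≠ d ∧ b ≠ e ∧ c ≠ d ∧ c ≠ e ∧ d ≠ e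

/-- `col` appears on some edge among `a,b,c,d,e`. -/
noncomputable def IsAttained {m : ℕ} (a b c d e : Vtx m) (col : Color m) : Prop :=
  colorCount a b c d e col ≠ 0

/-- A 2-2-2-2-2 configuration: five distinct vertices such that `φ` on the ten edges
among them takes exactly five values, each attained on exactly two edges. -/
def IsConfig22222 {m : ℕ} (a b c d e : Vtx m) : Prop :=
  Distinct5 a b c d e ∧
  ∀ col : Color m, colorCount a b c d e col = 0 ∨ colorCount a b c d e col = 2

/-- The color class of `col` is a matching: two vertex-disjoint edges of color `col`. -/
def IsMatchingClass {m : ℕ} (a b c d e : Vtx m) (col : Color m) : Prop :=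
  ∃ p ∈ edgeList a b c d e, ∃ q ∈ edgeList a b c d e,
    phi p.1 p.2 = col ∧ phi q.1 q.2 = col ∧
    p.1 ≠ q.1 ∧ p.1 ≠ q.2 ∧ p.2 ≠ q.1 ∧ p.2 ≠ q.2

/-- The color class of `col` is a path: two distinct edges of color `col` sharing a vertex. -/
def IsPathClass {m : ℕ} (a b c d e : Vtx m) (col : Color m) : Prop :=
  ∃ p ∈ edgeList a b c d e, ∃ q ∈ edgeList a b c d e,
    p ≠ q ∧ phi p.1 p.2 = col ∧ phi q.1 q.2 = col ∧
    (p.1 = q.1 ∨ p.1 = q.2 ∨ p.2 = q.1 ∨ p.2 = q.2)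


/-!
Only the first coordinate `(i, {x^(i), y^(i)})` of `φ` matters. If `φ(xy)` and `φ(zy)` agree
there, then `x` and `z` both agree with `y` before block `i`, and at block `i` we have
`x^(i) ≠ y^(i)` while `{x^(i), y^(i)} = {z^(i), y^(i)}`, so `x^(i) = z^(i)`. Hence the first
block where `x` and `z` differ lies strictly beyond the first block where `x` and `y` differ.
Taking `x = a` and walking around the cycle `c, b, d, e` of the configuration, the four color
equalities give `i(a,c) < i(a,b) < i(a,d) < i(a,e) < i(a,c)`.
-/

lemma firstDiffBlock_comm {m : ℕ} (x y : Vtx m) : firstDiffBlock x y = firstDiffBlock y x := by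
  simp only [firstDiffBlock, ne_comm]

lemma blockAt_firstDiffBlock_ne {m : ℕ} {x y : Vtx m} (h : x ≠ y) :
    blockAt x (firstDiffBlock x y) ≠ blockAt y (firstDiffBlock x y) := by
  obtain ⟨k, hk⟩ := Function.ne_iff.mp h
  refine Nat.sInf_mem (s := {k | blockAt x k ≠ blockAt y k}) ⟨k, ?_⟩
  simpa [blockAt] using hk

lemma blockAt_eq_of_lt_firstDiffBlock {m : ℕ} {x y : Vtx m} {k : ℕ}
    (h : k < firstDiffBlock x y) : blockAt x k = blockAt y k :=
  not_not.mp (Nat.notMem_of_lt_sInf h)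

lemma lt_firstDiffBlock_of_forall_le {m : ℕ} {x y : Vtx m} {i : ℕ} (hxy : x ≠ y)
    (h : ∀ k ≤ i, blockAt x k = blockAt y k) : i < firstDiffBlock x y :=
  not_le.mp fun hle => blockAt_firstDiffBlock_ne hxy (h _ hle)

lemma phi_fst {m : ℕ} (x y : Vtx m) :
    (phi x y).1 = (firstDiffBlock x y,
      ({blockAt x (firstDiffBlock x y), blockAt y (firstDiffBlock x y)} :
        Set (Fin m → Bool))) := by
  unfold phi phiAux
  split
  · rfl
  · rw [firstDiffBlock_comm y x, Set.pair_comm]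

lemma phi_fst_comm {m : ℕ} (x y : Vtx m) : (phi x y).1 = (phi y x).1 := by
  rw [phi_fst, phi_fst, firstDiffBlock_comm y x, Set.pair_comm]

lemma firstDiffBlock_lt_of_phi_fst_eq {m : ℕ} {x y z : Vtx m} (hxy : x ≠ y) (hxz : x ≠ z)
    (h : (phi x y).1 = (phi z y).1) :
    firstDiffBlock x y < firstDiffBlock x z := by
  rw [phi_fst, phi_fst, Prod.mk.injEq] at h
  obtain ⟨hi, hpair⟩ := h
  set i := firstDiffBlock x y
  rw [← hi] at hpair
  have hxi : blockAt x i ≠ blockAt y i := blockAt_firstDiffBlock_ne hxy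
  have hxz_i : blockAt x i = blockAt z i := by
    have hmem : blockAt x i ∈ ({blockAt z i, blockAt y i} : Set (Fin m → Bool)) :=
      hpair ▸ Set.mem_insert _ _
    exact hmem.resolve_right hxi
  refine lt_firstDiffBlock_of_forall_le hxz fun k hk => ?_
  rcases hk.lt_or_eq with hk | rfl
  · rw [blockAt_eq_of_lt_firstDiffBlock hk,
      blockAt_eq_of_lt_firstDiffBlock (hi ▸ hk : k < firstDiffBlock z y)]
  · exact hxz_i

theorem no_one_matching_config_general (m : ℕ) :
    ¬ ∃ a b c d e : Vtx m, Distinct5 a b c d e ∧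
      phi a c = phi b c ∧ phi a b = phi b d ∧ phi a d = phi d e ∧ phi a e = phi e c := by
  rintro ⟨a, b, c, d, e, ⟨hab, hac, had, hae, -⟩, hc, hb, hd, he⟩
  have hcb : firstDiffBlock a c < firstDiffBlock a b :=
    firstDiffBlock_lt_of_phi_fst_eq hac hab (congrArg Prod.fst hc)
  have hbd : firstDiffBlock a b < firstDiffBlock a d :=
    firstDiffBlock_lt_of_phi_fst_eq hab had (by rw [hb, phi_fst_comm])
  have hde : firstDiffBlock a d < firstDiffBlock a e :=
    firstDiffBlock_lt_of_phi_fst_eq had hae (by rw [hd, phi_fst_comm])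
  have hec : firstDiffBlock a e < firstDiffBlock a c :=
    firstDiffBlock_lt_of_phi_fst_eq hae hac (by rw [he, phi_fst_comm])
  omega

/-- The configuration of Figure (B) is forbidden under the Modified CFLS coloring. -/
theorem no_one_matching_config (m : ℕ) (hm : 0 < m) :
    ¬ ∃ a b c d e : Vtx m, Distinct5 a b c d e ∧
      phi a c = phi b c ∧ phi a b = phi b d ∧ phi a d = phi d e ∧ phi a e = phi e c :=
  no_one_matching_config_general m

end CFLS
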